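/- The k-DPP expectation is Schur-convex in the eigenvalues: if λ is a vector of n nonnegative reals, then the map λ ↦ e₁(λ) − (k+1)e_{k+1}(λ)/e_k(λ) is Schur-convex. Equivalently, if A and B are n×n symmetric PSD matrices whose eigenvalue vectors satisfy λ_A ≺ λ_B (majorization), then D_k(A) ≤ D_k(B) for all 0 ≤ k ≤ n. -/

import Mathlib

open Matrix BigOperators

/-- The elementary symmetric polynomial of degree `k` in the entries of `x`. -/
noncomputable def esym {n : ℕ} (k : ℕ) (x : Fin n → ℝ) : ℝ :=
  ∑ S ∈ Finset.univ.powersetCard k, ∏ i ∈ S, x i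

/-- `a` is majorized by `b` (written `a ≺ b`): the total sums agree, and for every
cardinality the sum of any subset of entries of `a` is dominated by the sum of some
subset of entries of `b` of the same cardinality (equivalently, partial sums of the
decreasingly sorted vectors are dominated). -/
def Majorizes {n : ℕ} (a b : Fin n → ℝ) : Prop :=
  (∑ i, a i = ∑ i, b i) ∧
  ∀ S : Finset (Fin n), ∃ T : Finset (Fin n), T.card = S.card ∧
    ∑ i ∈ S, a i ≤ ∑ i ∈ T, b i

/-!
If two coordinates `u, v` of a nonnegative vector are moved towards each other with their sum
fixed, then `e_m = E_m + (u + v) E_{m-1} + u v E_{m-2}`, where `E` are the elementary symmetric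
polynomials of the remaining coordinates, and only the product `u v` grows. Hence every `e_m`
grows, and the Newton-type inequalities `E_i E_{j+1} ≤ E_{i+1} E_j` show that `e_{k+1} / e_k`
grows as well. If `λ_A ≺ λ_B`, then `λ_B` is carried to `λ_A` by finitely many such moves
(Hardy–Littlewood–Pólya), so `e_{k+1} / e_k` is larger at `λ_A`, while the traces agree.
-/

open Finset

namespace Multiset

section CommSemiring

variable {R : Type*} [CommSemiring R]

@[simp] lemma esymm_zero_right (s : Multiset R) : s.esymm 0 = 1 := by
  simp [esymm, powersetCard_zero_left]

@[simp] lemma zero_esymm_succ (m : ℕ) : (0 : Multiset R).esymm (m + 1) = 0 := by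
  simp [esymm, powersetCard_zero_right]

lemma esymm_cons_succ (a : R) (s : Multiset R) (m : ℕ) :
    (a ::ₘ s).esymm (m + 1) = s.esymm (m + 1) + a * s.esymm m := by
  simp [esymm, powersetCard_cons, sum_map_mul_left]

lemma esymm_cons_cons_one (a b : R) (s : Multiset R) :
    (a ::ₘ b ::ₘ s).esymm 1 = s.esymm 1 + (a + b) := by
  simp only [esymm_cons_succ, esymm_zero_right]
  ring

lemma esymm_cons_cons_add_two (a b : R) (s : Multiset R) (m : ℕ) :
    (a ::ₘ b ::ₘ s).esymm (m + 2) =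
      s.esymm (m + 2) + (a + b) * s.esymm (m + 1) + a * b * s.esymm m := by
  simp only [esymm_cons_succ]
  ring

end CommSemiring

variable {R : Type*} [CommRing R] [LinearOrder R] [IsStrictOrderedRing R]

lemma esymm_nonneg {s : Multiset R} (hs : ∀ a ∈ s, 0 ≤ a) (m : ℕ) : 0 ≤ s.esymm m :=
  sum_nonneg fun _ ht ↦ by
    obtain ⟨t, hts, rfl⟩ := mem_map.mp ht
    exact prod_nonneg fun a ha ↦ hs a (mem_of_le (mem_powersetCard.mp hts).1 ha)

theorem esymm_mul_esymm_succ_le {s : Multiset R} (hs : ∀ a ∈ s, 0 ≤ a) {i j : ℕ}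
    (hij : i ≤ j) :
    s.esymm i * s.esymm (j + 1) ≤ s.esymm (i + 1) * s.esymm j := by
  induction s using Multiset.induction_on generalizing i j with
  | empty =>
    rw [zero_esymm_succ, mul_zero]
    exact mul_nonneg (esymm_nonneg (by simp) _) (esymm_nonneg (by simp) _)
  | cons a s ih =>
    have ha : 0 ≤ a := hs a (mem_cons_self a s)
    replace hs : ∀ b ∈ s, 0 ≤ b := fun b hb ↦ hs b (mem_cons_of_mem hb)
    have hE := esymm_nonneg hs
    obtain rfl | hij := hij.eq_or_lt
    · rw [mul_comm]
    obtain ⟨j, rfl⟩ : ∃ j', j = j' + 1 := ⟨j - 1, by omega⟩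
    rcases i with _ | i
    · have h := ih hs (Nat.zero_le (j + 1))
      simp only [esymm_zero_right, esymm_cons_succ, zero_add] at h ⊢
      nlinarith [mul_nonneg ha (mul_nonneg (hE 1) (hE j)), mul_nonneg (mul_nonneg ha ha) (hE j)]
    · have h₁ := ih hs (show i + 1 ≤ j + 1 by omega)
      have h₂ := ih hs (show i ≤ j + 1 by omega)
      have h₃ := ih hs (show i + 1 ≤ j by omega)
      have h₄ := ih hs (show i ≤ j by omega)
      simp only [esymm_cons_succ]
      nlinarith [mul_le_mul_of_nonneg_left (h₂.trans h₃) ha,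
        mul_le_mul_of_nonneg_left h₄ (mul_nonneg ha ha)]

section PairSmoothing

variable {a b a' b' : R} {s : Multiset R}

lemma esymm_cons_cons_le_of_mul_le (hs : ∀ c ∈ s, 0 ≤ c) (hsum : a + b = a' + b')
    (hprod : a * b ≤ a' * b') (m : ℕ) :
    (a ::ₘ b ::ₘ s).esymm m ≤ (a' ::ₘ b' ::ₘ s).esymm m := by
  match m with
  | 0 => simp
  | 1 => rw [esymm_cons_cons_one, esymm_cons_cons_one, hsum]
  | m + 2 =>
    rw [esymm_cons_cons_add_two, esymm_cons_cons_add_two, hsum]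
    have := mul_le_mul_of_nonneg_right hprod (esymm_nonneg hs m)
    linarith

lemma esymm_succ_mul_esymm_cons_cons_le_of_mul_le (hs : ∀ c ∈ s, 0 ≤ c) (hab : 0 ≤ a + b)
    (hsum : a + b = a' + b') (hprod : a * b ≤ a' * b') (k : ℕ) :
    (a ::ₘ b ::ₘ s).esymm (k + 1) * (a' ::ₘ b' ::ₘ s).esymm k ≤
      (a' ::ₘ b' ::ₘ s).esymm (k + 1) * (a ::ₘ b ::ₘ s).esymm k := by
  match k with
  | 0 => simp [esymm_cons_cons_one, hsum]
  | 1 =>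
    rw [esymm_cons_cons_one, esymm_cons_cons_one, hsum]
    exact mul_le_mul_of_nonneg_right (esymm_cons_cons_le_of_mul_le hs hsum hprod 2)
      (add_nonneg (esymm_nonneg hs 1) (hsum ▸ hab))
  | k + 2 =>
    rw [esymm_cons_cons_add_two, esymm_cons_cons_add_two, esymm_cons_cons_add_two,
      esymm_cons_cons_add_two, hsum]
    have h₁ := esymm_mul_esymm_succ_le hs (show k ≤ k + 2 by omega)
    have h₂ := esymm_mul_esymm_succ_le hs (show k ≤ k + 1 by omega)
    -- With `e_m = A_m + p B_m`, where `p` is the product of the pair, the cross difference is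
    -- `(p' - p) (A_k B_{k+1} - A_{k+1} B_k)`, and the second factor is nonnegative by Newton.
    have key : 0 ≤ (a' * b' - a * b) *
        ((s.esymm (k + 1) * s.esymm (k + 2) - s.esymm k * s.esymm (k + 3)) +
          (a' + b') * (s.esymm (k + 1) * s.esymm (k + 1) - s.esymm k * s.esymm (k + 2))) :=
      mul_nonneg (sub_nonneg.mpr hprod)
        (add_nonneg (by linarith) (mul_nonneg (hsum ▸ hab) (by linarith)))
    linear_combination key

end PairSmoothing

end Multiset

lemma esym_eq_esymm {n : ℕ} (k : ℕ) (x : Fin n → ℝ) :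
    esym k x = (univ.val.map x).esymm k :=
  (esymm_map_val x univ k).symm

-- A T-transform: with the sum of the pair fixed, the product condition says that it moved
-- towards its mean.
def IsPairSmoothing {ι : Type*} (x y : ι → ℝ) : Prop :=
  ∃ i j, i ≠ j ∧ (∀ l, l ≠ i → l ≠ j → x l = y l) ∧ x i + x j = y i + y j ∧
    y i * y j ≤ x i * x j

namespace IsPairSmoothing

variable {ι : Type*} {x y : ι → ℝ}

lemma nonneg (h : IsPairSmoothing x y) (hy : ∀ i, 0 ≤ y i) (l : ι) : 0 ≤ x l := by
  obtain ⟨i, j, -, hagree, hsum, hprod⟩ := h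
  have hprod' : 0 ≤ x i * x j := (mul_nonneg (hy i) (hy j)).trans hprod
  have hsum' : 0 ≤ x i + x j := hsum ▸ add_nonneg (hy i) (hy j)
  by_cases hli : l = i
  · subst hli; nlinarith
  by_cases hlj : l = j
  · subst hlj; nlinarith
  exact hagree l hli hlj ▸ hy l

lemma exists_map_univ_eq_cons_cons [Fintype ι] (h : IsPairSmoothing x y) :
    ∃ (u v u' v' : ℝ) (t : Multiset ℝ), univ.val.map y = u ::ₘ v ::ₘ t ∧
      univ.val.map x = u' ::ₘ v' ::ₘ t ∧ u + v = u' + v' ∧ u * v ≤ u' * v' := by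
  classical
  obtain ⟨i, j, hij, hagree, hsum, hprod⟩ := h
  have hsplit (z : ι → ℝ) :
      univ.val.map z = z i ::ₘ z j ::ₘ ((univ.erase i).erase j).val.map z := by
    rw [erase_val, erase_val, ← Multiset.map_cons, ← Multiset.map_cons,
      Multiset.cons_erase (Multiset.mem_erase_of_ne hij.symm |>.mpr (mem_univ j)),
      Multiset.cons_erase (mem_univ i)]
  refine ⟨y i, y j, x i, x j, _, hsplit y, (hsplit x).trans ?_, hsum.symm, hprod⟩
  congr 2
  refine Multiset.map_congr rfl fun l hl ↦ ?_
  rw [mem_val, mem_erase, mem_erase] at hl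
  exact hagree l hl.2.1 hl.1

lemma esym_le {n : ℕ} {x y : Fin n → ℝ} (h : IsPairSmoothing x y) (hy : ∀ i, 0 ≤ y i)
    (m : ℕ) : esym m y ≤ esym m x := by
  obtain ⟨u, v, u', v', t, hyt, hxt, hsum, hprod⟩ := h.exists_map_univ_eq_cons_cons
  have ht : ∀ c ∈ u ::ₘ v ::ₘ t, 0 ≤ c := by simpa [← hyt] using hy
  simp only [Multiset.mem_cons, forall_eq_or_imp] at ht
  rw [esym_eq_esymm, esym_eq_esymm, hyt, hxt]
  exact Multiset.esymm_cons_cons_le_of_mul_le ht.2.2 hsum hprod m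

lemma esym_succ_div_esym_le {n : ℕ} {x y : Fin n → ℝ} (h : IsPairSmoothing x y)
    (hy : ∀ i, 0 ≤ y i) {k : ℕ} (hk : 0 < esym k y) :
    esym (k + 1) y / esym k y ≤ esym (k + 1) x / esym k x := by
  rw [div_le_div_iff₀ hk (hk.trans_le (h.esym_le hy k))]
  obtain ⟨u, v, u', v', t, hyt, hxt, hsum, hprod⟩ := h.exists_map_univ_eq_cons_cons
  have ht : ∀ c ∈ u ::ₘ v ::ₘ t, 0 ≤ c := by simpa [← hyt] using hy
  simp only [Multiset.mem_cons, forall_eq_or_imp] at ht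
  simp only [esym_eq_esymm, hyt, hxt]
  exact Multiset.esymm_succ_mul_esymm_cons_cons_le_of_mul_le ht.2.2 (add_nonneg ht.1 ht.2.1)
    hsum hprod k

end IsPairSmoothing

section PairSmoothingInduction

variable {ι : Type*} [Fintype ι] [LinearOrder ι] {a b : ι → ℝ}

lemma exists_smoothing_indices (hsum : ∑ i, a i = ∑ i, b i)
    (hlower : ∀ s : Finset ι, IsLowerSet (s : Set ι) → ∑ i ∈ s, a i ≤ ∑ i ∈ s, b i)
    (hab : a ≠ b) :
    ∃ j l, j < l ∧ a j < b j ∧ b l < a l ∧ ∀ i < l, a i ≤ b i := by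
  have hL : ({i | b i < a i} : Finset ι).Nonempty := by
    by_contra! hL
    have hle : ∀ i, a i ≤ b i := fun i ↦ not_lt.mp (filter_eq_empty_iff.mp hL (mem_univ i))
    obtain ⟨i, hi⟩ := Function.ne_iff.mp hab
    exact (sum_lt_sum (fun i _ ↦ hle i) ⟨i, mem_univ i, (hle i).lt_of_ne hi⟩).ne hsum
  obtain ⟨l, hl, hlmin⟩ := exists_min_image _ id hL
  have hbelow : ∀ i < l, a i ≤ b i := fun i hil ↦
    not_lt.mp fun hi ↦ (hlmin i (mem_filter.mpr ⟨mem_univ i, hi⟩)).not_gt hil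
  have hl : b l < a l := (mem_filter.mp hl).2
  have hIio : ∑ i with i < l, a i < ∑ i with i < l, b i := by
    have hIic : univ.filter (· ≤ l) = insert l (univ.filter (· < l)) := by
      ext i; simp [le_iff_lt_or_eq, or_comm]
    have := hlower (univ.filter (· ≤ l)) fun i i' hi' hi ↦ by
      simp only [coe_filter, mem_univ, true_and] at hi ⊢
      exact hi'.trans hi
    rw [hIic, sum_insert (by simp), sum_insert (by simp)] at this
    linarith
  obtain ⟨j, hj, hjb⟩ := exists_lt_of_sum_lt hIio
  exact ⟨j, l, (mem_filter.mp hj).2, hjb, hl, hbelow⟩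

lemma exists_isPairSmoothing_card_lt (ha : Antitone a) (hsum : ∑ i, a i = ∑ i, b i)
    (hlower : ∀ s : Finset ι, IsLowerSet (s : Set ι) → ∑ i ∈ s, a i ≤ ∑ i ∈ s, b i)
    (hab : a ≠ b) :
    ∃ b', IsPairSmoothing b' b ∧ ∑ i, a i = ∑ i, b' i ∧
      (∀ s : Finset ι, IsLowerSet (s : Set ι) → ∑ i ∈ s, a i ≤ ∑ i ∈ s, b' i) ∧
      #{i | a i ≠ b' i} < #{i | a i ≠ b i} := by
  obtain ⟨j, l, hjl, hj, hl, hbelow⟩ := exists_smoothing_indices hsum hlower hab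
  set δ := min (b j - a j) (a l - b l) with hδ
  have hδj : δ ≤ b j - a j := min_le_left _ _
  have hδl : δ ≤ a l - b l := min_le_right _ _
  have hδ0 : 0 ≤ δ := le_min (by linarith) (by linarith)
  set b' := b - Pi.single j δ + Pi.single l δ with hb'
  have hb'j : b' j = b j - δ := by simp [hb', hjl.ne']
  have hb'l : b' l = b l + δ := by simp [hb', hjl.ne]
  have hb'i : ∀ i, i ≠ j → i ≠ l → b' i = b i := fun i hij hil ↦ by simp [hb', hij, hil]
  have hsum_b' : ∀ s : Finset ι, ∑ i ∈ s, b' i =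
      ∑ i ∈ s, b i - (if j ∈ s then δ else 0) + (if l ∈ s then δ else 0) := fun s ↦ by
    simp [hb', sum_add_distrib, sum_sub_distrib, sum_pi_single']
  refine ⟨b', ⟨j, l, hjl.ne, hb'i, ?_, ?_⟩, ?_, ?_, ?_⟩
  · rw [hb'j, hb'l]; ring
  · have := ha hjl.le
    rw [hb'j, hb'l]; nlinarith
  · simp [hsum_b', hsum]
  · intro s hs
    have hs_sum := hlower s hs
    rw [hsum_b']
    split_ifs with hjs hls
    · linarith
    · -- `s` lies below `l`, where `a ≤ b`, and the `j`-term alone pays for `δ`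
      have hlt : ∀ i ∈ s, i < l := fun i hi ↦ lt_of_not_ge fun hli ↦ hls (hs hli hi)
      have := single_le_sum (f := fun i ↦ b i - a i)
        (fun i hi ↦ sub_nonneg.mpr (hbelow i (hlt i hi))) hjs
      rw [sum_sub_distrib] at this
      linarith
    · linarith
    · linarith
  · have hsub : ({i | a i ≠ b' i} : Finset ι) ⊆ ({i | a i ≠ b i} : Finset ι) := by
      intro i
      simp only [mem_filter, mem_univ, true_and]
      refine mt fun hi ↦ ?_
      rw [hb'i i (by rintro rfl; exact hj.ne hi) (by rintro rfl; exact hl.ne' hi), hi]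
    refine card_lt_card ((ssubset_iff_of_subset hsub).mpr ?_)
    rcases min_choice (b j - a j) (a l - b l) with h | h
    · exact ⟨j, by simp [hj.ne], by simp [hb'j, hδ.trans h]⟩
    · exact ⟨l, by simp [hl.ne'], by simp [hb'l, hδ.trans h]⟩

-- Hardy–Littlewood–Pólya: `b` is carried to `a` by finitely many pair smoothings, each making
-- one more coordinate agree with `a`.
theorem IsPairSmoothing.induction (ha : Antitone a) (P : (ι → ℝ) → Prop) (base : P a)
    (step : ∀ x y, IsPairSmoothing x y → P x → P y) (b : ι → ℝ)
    (hsum : ∑ i, a i = ∑ i, b i)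
    (hlower : ∀ s : Finset ι, IsLowerSet (s : Set ι) →
      ∑ i ∈ s, a i ≤ ∑ i ∈ s, b i) : P b := by
  by_cases hab : a = b
  · exact hab ▸ base
  obtain ⟨b', hb', hsum', hlower', hcard⟩ := exists_isPairSmoothing_card_lt ha hsum hlower hab
  exact step b' b hb' (IsPairSmoothing.induction ha P base step b' hsum' hlower')
termination_by #{i | a i ≠ b i}

end PairSmoothingInduction

lemma Finset.sum_le_sum_of_card_eq_of_forall_le {ι : Type*} {s t : Finset ι} {f : ι → ℝ}
    (hcard : #s = #t) (hle : ∀ i ∈ s, ∀ j ∈ t, f i ≤ f j) :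
    ∑ i ∈ s, f i ≤ ∑ j ∈ t, f j := by
  rcases t.eq_empty_or_nonempty with rfl | ht
  · simp [card_eq_zero.mp hcard]
  obtain ⟨j₀, hj₀, hmin⟩ := t.exists_min_image f ht
  calc ∑ i ∈ s, f i
    _ ≤ #s • f j₀ := sum_le_card_nsmul _ _ _ fun i hi ↦ hle i hi j₀ hj₀
    _ = #t • f j₀ := by rw [hcard]
    _ ≤ ∑ j ∈ t, f j := card_nsmul_le_sum _ _ _ hmin

lemma Antitone.sum_le_sum_of_isLowerSet {ι : Type*} [LinearOrder ι] {f : ι → ℝ}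
    (hf : Antitone f) {s t : Finset ι} (hs : IsLowerSet (s : Set ι)) (hcard : #t = #s) :
    ∑ i ∈ t, f i ≤ ∑ i ∈ s, f i := by
  have hsdiff : ∑ i ∈ t \ s, f i ≤ ∑ i ∈ s \ t, f i := by
    refine sum_le_sum_of_card_eq_of_forall_le (card_sdiff_comm hcard) fun i hi j hj ↦ hf ?_
    rw [mem_sdiff] at hi hj
    exact le_of_lt <| lt_of_not_ge fun hij ↦ hi.2 (hs hij hj.1)
  linarith [sum_sdiff_sub_sum_sdiff (s₁ := s) (s₂ := t) (f := f)]

section Majorization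

variable {n : ℕ} {a b : Fin n → ℝ}

lemma Majorizes.sum_le_sum_of_isLowerSet (h : Majorizes a b) (hb : Antitone b)
    {s : Finset (Fin n)} (hs : IsLowerSet (s : Set (Fin n))) :
    ∑ i ∈ s, a i ≤ ∑ i ∈ s, b i := by
  obtain ⟨t, ht, hle⟩ := h.2 s
  exact hle.trans (hb.sum_le_sum_of_isLowerSet hs ht)

lemma Majorizes.comp_perm (h : Majorizes a b) (σ τ : Equiv.Perm (Fin n)) :
    Majorizes (a ∘ σ) (b ∘ τ) := by
  refine ⟨by simpa [Equiv.sum_comp] using h.1, fun s ↦ ?_⟩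
  obtain ⟨t, ht, hle⟩ := h.2 (s.map σ.toEmbedding)
  refine ⟨t.map τ.symm.toEmbedding, by simpa using ht, ?_⟩
  simpa [sum_map] using hle

lemma exists_perm_antitone (x : Fin n → ℝ) : ∃ σ : Equiv.Perm (Fin n), Antitone (x ∘ σ) :=
  ⟨Tuple.sort (OrderDual.toDual ∘ x), monotone_toDual_comp_iff.mp (Tuple.monotone_sort _)⟩

lemma esym_comp_perm (k : ℕ) (x : Fin n → ℝ) (σ : Equiv.Perm (Fin n)) :
    esym k (x ∘ σ) = esym k x := by
  rw [esym_eq_esymm, esym_eq_esymm, ← Multiset.map_map, Multiset.map_univ_val_equiv]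

theorem Majorizes.esym_succ_div_esym_le (h : Majorizes a b) (hb : ∀ i, 0 ≤ b i) {k : ℕ}
    (hk : 0 < esym k b) : esym (k + 1) b / esym k b ≤ esym (k + 1) a / esym k a := by
  obtain ⟨σ, hσ⟩ := exists_perm_antitone a
  obtain ⟨τ, hτ⟩ := exists_perm_antitone b
  have hστ := h.comp_perm σ τ
  have key := IsPairSmoothing.induction hσ
    (fun x ↦ (∀ i, 0 ≤ x i) → 0 < esym k x →
      esym (k + 1) x / esym k x ≤ esym (k + 1) (a ∘ σ) / esym k (a ∘ σ))
    (fun _ _ ↦ le_rfl) ?_ (b ∘ τ) hστ.1 fun s hs ↦ hστ.sum_le_sum_of_isLowerSet hτ hs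
  · simpa only [esym_comp_perm] using key (fun i ↦ hb (τ i)) (by rwa [esym_comp_perm])
  · intro x y hxy hx hy hyk
    exact (hxy.esym_succ_div_esym_le hy hyk).trans
      (hx (hxy.nonneg hy) (hyk.trans_le (hxy.esym_le hy k)))

end Majorization

theorem stmt_14_general (n : ℕ) (A B : Matrix (Fin n) (Fin n) ℝ)
    (hA : A.PosSemidef) (hB : B.PosSemidef)
    (hmaj : Majorizes hA.1.eigenvalues hB.1.eigenvalues)
    (k : ℕ)
    (heB : 0 < esym k hB.1.eigenvalues) :
    A.trace - (k + 1) * esym (k + 1) hA.1.eigenvalues / esym k hA.1.eigenvalues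
      ≤ B.trace - (k + 1) * esym (k + 1) hB.1.eigenvalues / esym k hB.1.eigenvalues := by
  have htrace : A.trace = B.trace := by
    simpa [hA.1.trace_eq_sum_eigenvalues, hB.1.trace_eq_sum_eigenvalues] using hmaj.1
  have hratio := hmaj.esym_succ_div_esym_le hB.eigenvalues_nonneg heB
  rw [htrace, mul_div_assoc, mul_div_assoc]
  gcongr

/-- Schur-convexity of the k-DPP expectation: if `A` and `B` are symmetric PSD matrices
whose eigenvalue vectors satisfy `λ_A ≺ λ_B`, then `D_k(A) ≤ D_k(B)` for `0 ≤ k ≤ n`,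
where `D_k(M) = Tr[M] − (k+1) e_{k+1}(λ(M))/e_k(λ(M))` (assuming `e_k(λ) > 0` where
needed). -/
theorem stmt_14 (n : ℕ) (A B : Matrix (Fin n) (Fin n) ℝ)
    (hA : A.PosSemidef) (hB : B.PosSemidef)
    (hmaj : Majorizes hA.1.eigenvalues hB.1.eigenvalues)
    (k : ℕ) (hk : k ≤ n)
    (heA : 0 < esym k hA.1.eigenvalues) (heB : 0 < esym k hB.1.eigenvalues) :
    A.trace - (k + 1) * esym (k + 1) hA.1.eigenvalues / esym k hA.1.eigenvalues
      ≤ B.trace - (k + 1) * esym (k + 1) hB.1.eigenvalues / esym k hB.1.eigenvalues :=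
  stmt_14_general n A B hA hB hmaj k heB
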